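/- arXiv:1902.02285 — 5 statements merged into one kernel-verified Lean document; each statement's English description precedes it below -/
import Mathlib

section
/- Let A be the 4×4 real matrix with rows (1,0,0,0), (0,0,2,0), (0,2,0,0), (0,0,0,1), let u = (0,0,1,0)ᵀ, and let θ = u*Au = 0, so that the residual is r = (A−θI)u = (0,2,0,0)ᵀ. Then A−θI = A is nonsingular, yet there exists no vector t ∈ ℝ⁴ satisfying the Jacobi–Davidson correction equation (I−uu*)(A−θI)(I−uu*)t = −r. -/
/-!
The residual `r = A u` is orthogonal to `u`, and `Aᵀ r = 4 u`. Hence for `s ⊥ u` we get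
`⟪r, (I - uu*) A s⟫ = ⟪r, A s⟫ = ⟪Aᵀ r, s⟫ = 4 ⟪u, s⟫ = 0`: the range of the projected operator
`(I - uu*) A (I - uu*)` is orthogonal to `r`, so it cannot contain `-r ≠ 0`.
-/

open Matrix

/-- Orthogonal projection `(I - uu*) t = t - (u ⬝ᵥ t) • u` onto the orthogonal
complement of the unit vector `u` in `ℝ⁴`. -/
noncomputable def projR4 (u t : Fin 4 → ℝ) : Fin 4 → ℝ :=
  t - (u ⬝ᵥ t) • u

section ProjOrth

variable {n R : Type*} [Fintype n] [CommRing R]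

def projOrth (u t : n → R) : n → R :=
  t - (u ⬝ᵥ t) • u

variable {u : n → R}

theorem dotProduct_projOrth (hu : u ⬝ᵥ u = 1) (t : n → R) : u ⬝ᵥ projOrth u t = 0 := by
  rw [projOrth, dotProduct_sub, dotProduct_smul, hu, smul_eq_mul, mul_one, sub_self]

theorem dotProduct_projOrth_of_dotProduct_eq_zero {w : n → R} (hw : w ⬝ᵥ u = 0) (t : n → R) :
    w ⬝ᵥ projOrth u t = w ⬝ᵥ t := by
  rw [projOrth, dotProduct_sub, dotProduct_smul, hw, smul_zero, sub_zero]

theorem dotProduct_projOrth_mulVec_projOrth_eq_zero (hu : u ⬝ᵥ u = 1) {B : Matrix n n R}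
    {r : n → R} (hr : r ⬝ᵥ u = 0) {c : R} (hrB : r ᵥ* B = c • u) (t : n → R) :
    r ⬝ᵥ projOrth u (B *ᵥ projOrth u t) = 0 := by
  rw [dotProduct_projOrth_of_dotProduct_eq_zero hr, dotProduct_mulVec, hrB, smul_dotProduct,
    dotProduct_projOrth hu, smul_zero]

end ProjOrth

theorem not_exists_projOrth_mulVec_projOrth_eq_neg {n : Type*} [Fintype n] {u r : n → ℝ}
    {B : Matrix n n ℝ} (hu : u ⬝ᵥ u = 1) (hr : r ⬝ᵥ u = 0) {c : ℝ} (hrB : r ᵥ* B = c • u)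
    (hr0 : r ≠ 0) : ¬ ∃ t, projOrth u (B *ᵥ projOrth u t) = -r := by
  rintro ⟨t, ht⟩
  have h := dotProduct_projOrth_mulVec_projOrth_eq_zero hu hr hrB t
  rw [ht, dotProduct_neg, neg_eq_zero, dotProduct_self_eq_zero] at h
  exact hr0 h

theorem stmt1 (A : Matrix (Fin 4) (Fin 4) ℝ)
    (hA : A = !![1, 0, 0, 0; 0, 0, 2, 0; 0, 2, 0, 0; 0, 0, 0, 1])
    (u : Fin 4 → ℝ) (hu : u = ![0, 0, 1, 0])
    (θ : ℝ) (hθ : θ = u ⬝ᵥ A.mulVec u)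
    (r : Fin 4 → ℝ) (hr : r = (A - θ • 1).mulVec u) :
    θ = 0 ∧ r = ![0, 2, 0, 0] ∧ IsUnit (A - θ • 1) ∧
      ¬ ∃ t : Fin 4 → ℝ,
        projR4 u ((A - θ • 1).mulVec (projR4 u t)) = -r := by
  subst hA hu
  obtain rfl : θ = 0 := by simp [hθ, mulVec, dotProduct, Fin.sum_univ_four]
  obtain rfl : r = ![0, 2, 0, 0] := by
    rw [hr]; ext i; fin_cases i <;> simp [mulVec, dotProduct, Fin.sum_univ_four]
  rw [zero_smul, sub_zero]
  refine ⟨rfl, rfl, ?_, ?_⟩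
  · rw [isUnit_iff_isUnit_det, isUnit_iff_ne_zero]
    simp [det_succ_row_zero, Fin.sum_univ_succ]
  · refine not_exists_projOrth_mulVec_projOrth_eq_neg (c := 4) ?_ ?_ ?_ ?_
    · simp
    · simp
    · norm_num
    · simp
end

section
/- Let A be an n×n complex matrix, θ ∈ ℂ, and u ∈ ℂⁿ a unit vector. Suppose t ∈ ℂⁿ satisfies the normal equation (I−uu*)(A−θI)*(A−θI)(I−uu*)t = −(I−uu*)(A−θI)*(A−θI)u and additionally (I−uu*)(A−θI)*(A−θI)(I−uu*)t = 0. Then (A−θI)(I−uu*)t = 0; consequently, either (I−uu*)t ≠ 0 and (I−uu*)t is an eigenvector of A corresponding to the eigenvalue θ, or (I−uu*)t = 0 and u is a right singular vector of A−θI, in the sense that (A−θI)*(A−θI)u = ‖(A−θI)u‖²·u. -/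
/-!
Write `B = A - θI` and `s = (I - uu*)t`. Then `s ⊥ u` and, by the second hypothesis,
`BᴴB s ∈ span {u}`, so `‖B s‖² = ⟪s, BᴴB s⟫ = 0`. If `s = 0`, the normal equation says
`BᴴB u ∈ span {u}`, and the coefficient is `⟪u, BᴴB u⟫ = ‖B u‖²`.
-/

open scoped ComplexInnerProductSpace Matrix

/-- The action of a matrix on a vector of `EuclideanSpace ℂ (Fin n)`. -/
noncomputable def mApp {n : ℕ} (A : Matrix (Fin n) (Fin n) ℂ)
    (v : EuclideanSpace ℂ (Fin n)) : EuclideanSpace ℂ (Fin n) :=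
  Matrix.toEuclideanLin A v

/-- The orthogonal projection `(I - uu*) t = t - ⟪u, t⟫ u` onto the orthogonal
complement of the unit vector `u`. -/
noncomputable def proj {n : ℕ} (u t : EuclideanSpace ℂ (Fin n)) :
    EuclideanSpace ℂ (Fin n) :=
  t - ⟪u, t⟫ • u

section

variable {n : ℕ}

lemma mApp_sub_smul_one (A : Matrix (Fin n) (Fin n) ℂ) (θ : ℂ) (v : EuclideanSpace ℂ (Fin n)) :
    mApp (A - θ • 1) v = mApp A v - θ • v := by
  simp [mApp]

lemma mApp_mul (M N : Matrix (Fin n) (Fin n) ℂ) (v : EuclideanSpace ℂ (Fin n)) :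
    mApp (M * N) v = mApp M (mApp N v) := by
  simp [mApp]

lemma inner_mApp_conjTranspose_right (B : Matrix (Fin n) (Fin n) ℂ)
    (x y : EuclideanSpace ℂ (Fin n)) : ⟪x, mApp Bᴴ y⟫ = ⟪mApp B x, y⟫ := by
  rw [mApp, Matrix.toEuclideanLin_conjTranspose_eq_adjoint]
  exact LinearMap.adjoint_inner_right _ _ _

lemma inner_mApp_conjTranspose_mul_self (B : Matrix (Fin n) (Fin n) ℂ)
    (x : EuclideanSpace ℂ (Fin n)) : ⟪x, mApp (Bᴴ * B) x⟫ = (‖mApp B x‖ : ℂ) ^ 2 := by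
  rw [mApp_mul, inner_mApp_conjTranspose_right, inner_self_eq_norm_sq_to_K]
  rfl

lemma proj_eq_zero_iff (u v : EuclideanSpace ℂ (Fin n)) : proj u v = 0 ↔ v = ⟪u, v⟫ • u :=
  sub_eq_zero

lemma inner_proj_self {u : EuclideanSpace ℂ (Fin n)} (hu : ‖u‖ = 1)
    (t : EuclideanSpace ℂ (Fin n)) : ⟪u, proj u t⟫ = 0 := by
  simp [proj, hu]

lemma mApp_eq_zero_of_proj_conjTranspose_mul_self_eq_zero (B : Matrix (Fin n) (Fin n) ℂ)
    {u s : EuclideanSpace ℂ (Fin n)} (hus : ⟪u, s⟫ = 0)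
    (h : proj u (mApp (Bᴴ * B) s) = 0) : mApp B s = 0 := by
  have hsu : ⟪s, u⟫ = 0 := by rw [← inner_conj_symm, hus, map_zero]
  have hgram : ⟪s, mApp (Bᴴ * B) s⟫ = 0 := by
    rw [(proj_eq_zero_iff u _).mp h, inner_smul_right, hsu, mul_zero]
  rw [inner_mApp_conjTranspose_mul_self] at hgram
  simpa using hgram

lemma mApp_conjTranspose_mul_self_eq_of_proj_eq_zero (B : Matrix (Fin n) (Fin n) ℂ)
    {u : EuclideanSpace ℂ (Fin n)} (h : proj u (mApp (Bᴴ * B) u) = 0) :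
    mApp (Bᴴ * B) u = ((‖mApp B u‖ : ℂ) ^ 2) • u := by
  rw [← inner_mApp_conjTranspose_mul_self]
  exact (proj_eq_zero_iff u _).mp h

end

theorem stmt2 {n : ℕ} (A : Matrix (Fin n) (Fin n) ℂ) (θ : ℂ)
    (u : EuclideanSpace ℂ (Fin n)) (hu : ‖u‖ = 1) (t : EuclideanSpace ℂ (Fin n))
    (hnormal : proj u (mApp ((A - θ • 1)ᴴ * (A - θ • 1)) (proj u t)) =
      -proj u (mApp ((A - θ • 1)ᴴ * (A - θ • 1)) u))
    (hzero : proj u (mApp ((A - θ • 1)ᴴ * (A - θ • 1)) (proj u t)) = 0) :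
    mApp (A - θ • 1) (proj u t) = 0 ∧
      ((proj u t ≠ 0 ∧ mApp A (proj u t) = θ • proj u t) ∨
        (proj u t = 0 ∧
          mApp ((A - θ • 1)ᴴ * (A - θ • 1)) u = ((‖mApp (A - θ • 1) u‖ : ℂ) ^ 2) • u)) := by
  have hkernel := mApp_eq_zero_of_proj_conjTranspose_mul_self_eq_zero _ (inner_proj_self hu t) hzero
  refine ⟨hkernel, ?_⟩
  by_cases hs : proj u t = 0
  · have hgram : proj u (mApp ((A - θ • 1)ᴴ * (A - θ • 1)) u) = 0 := by
      rw [hzero, eq_comm, neg_eq_zero] at hnormal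
      exact hnormal
    exact Or.inr ⟨hs, mApp_conjTranspose_mul_self_eq_of_proj_eq_zero _ hgram⟩
  · rw [mApp_sub_smul_one, sub_eq_zero] at hkernel
    exact Or.inl ⟨hs, hkernel⟩
end

section
/- Let A be an n×n Hermitian complex matrix, ρ ∈ ℝ a real number that is not an eigenvalue of A (so A−ρI is invertible), u ∈ ℂⁿ a unit vector, and u' := (A−ρI)^{-2}u / ‖(A−ρI)^{-2}u‖. Then ⟨u', u⟩ is real and positive, and (A−ρI)²u' = (‖(A−ρI)u'‖² / ⟨u', u⟩) · u. -/
open scoped ComplexInnerProductSpace Matrix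

/-- `μ` is an eigenvalue of the matrix `A`. -/
def IsEigenvalue {n : ℕ} (A : Matrix (Fin n) (Fin n) ℂ) (μ : ℂ) : Prop :=
  ∃ x : EuclideanSpace ℂ (Fin n), x ≠ 0 ∧ mApp A x = μ • x

/-!
Put `B = A - ρ I`, which is Hermitian and, since `ρ` is not an eigenvalue, invertible, and
`w = B⁻² u`. Then `u = ‖w‖ • B² u'`. For a symmetric `T` one has `⟪x, T² x⟫ = ‖T x‖²`, so
`⟪u', u⟫ = ‖w‖ ‖B u'‖²` is a positive real, and `B² u' = ‖w‖⁻¹ • u` is the claimed multiple of `u`.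
-/

namespace LinearMap.IsSymmetric

theorem inner_apply_apply_self {𝕜 E : Type*} [RCLike 𝕜] [NormedAddCommGroup E]
    [InnerProductSpace 𝕜 E] {T : E →ₗ[𝕜] E} (hT : T.IsSymmetric) (x : E) :
    inner 𝕜 x (T (T x)) = ((‖T x‖ ^ 2 : ℝ) : 𝕜) := by
  rw [← hT, inner_self_eq_norm_sq_to_K]
  push_cast
  rfl

theorem apply_apply_eq_div_inner_smul {E : Type*} [NormedAddCommGroup E] [InnerProductSpace ℂ E]
    {T : E →ₗ[ℂ] E} (hT : T.IsSymmetric) {c : ℝ} (hc : 0 < c) {x u : E}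
    (hu : u = c • T (T x)) (hu0 : u ≠ 0) :
    (⟪x, u⟫).im = 0 ∧ 0 < (⟪x, u⟫).re ∧
      T (T x) = (((‖T x‖ ^ 2 : ℝ) : ℂ) / ⟪x, u⟫) • u := by
  have hTx : T x ≠ 0 := fun h ↦ hu0 (by simp [hu, h])
  have hinner : ⟪x, u⟫ = ((c * ‖T x‖ ^ 2 : ℝ) : ℂ) := by
    rw [hu, ← Complex.coe_smul, inner_smul_right, hT.inner_apply_apply_self]
    push_cast
    rfl
  have hpos : 0 < c * ‖T x‖ ^ 2 := mul_pos hc (pow_pos (norm_pos_iff.mpr hTx) 2)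
  refine ⟨by rw [hinner, Complex.ofReal_im], by rwa [hinner, Complex.ofReal_re], ?_⟩
  have hcoef : ((‖T x‖ ^ 2 : ℝ) : ℂ) / ((c * ‖T x‖ ^ 2 : ℝ) : ℂ) * c = 1 := by
    have : (‖T x‖ : ℂ) ≠ 0 := by exact_mod_cast norm_ne_zero_iff.mpr hTx
    have : (c : ℂ) ≠ 0 := by exact_mod_cast hc.ne'
    push_cast
    field_simp
  rw [hinner, hu, ← Complex.coe_smul, smul_smul, hcoef, one_smul]

end LinearMap.IsSymmetric

section mApp

variable {n : ℕ}

lemma mApp_one (v : EuclideanSpace ℂ (Fin n)) : mApp 1 v = v := by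
  simp [mApp]

lemma mApp_smul_real (M : Matrix (Fin n) (Fin n) ℂ) (c : ℝ) (v : EuclideanSpace ℂ (Fin n)) :
    mApp M (c • v) = c • mApp M v :=
  (Matrix.toEuclideanLin M).map_smul_of_tower c v

lemma mApp_zero (M : Matrix (Fin n) (Fin n) ℂ) : mApp M 0 = 0 :=
  (Matrix.toEuclideanLin M).map_zero

lemma mApp_mApp_inv {M : Matrix (Fin n) (Fin n) ℂ} (hM : IsUnit M)
    (v : EuclideanSpace ℂ (Fin n)) : mApp M (mApp M⁻¹ v) = v := by
  rw [← mApp_mul, Matrix.mul_nonsing_inv _ ((Matrix.isUnit_iff_isUnit_det M).mp hM), mApp_one]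

lemma isUnit_sub_smul_one_of_not_isEigenvalue {A : Matrix (Fin n) (Fin n) ℂ} {μ : ℂ}
    (h : ¬ IsEigenvalue A μ) : IsUnit (A - μ • 1) := by
  rw [Matrix.isUnit_iff_isUnit_det, isUnit_iff_ne_zero]
  intro hdet
  obtain ⟨v, hv0, hv⟩ := Matrix.exists_mulVec_eq_zero_iff.mpr hdet
  refine h ⟨WithLp.toLp 2 v, by simpa using hv0, ?_⟩
  rw [Matrix.sub_mulVec, Matrix.smul_mulVec, Matrix.one_mulVec, sub_eq_zero] at hv
  simp [mApp, Matrix.toLpLin_apply, hv]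

end mApp

theorem stmt12 {n : ℕ} (A : Matrix (Fin n) (Fin n) ℂ) (hA : A.IsHermitian)
    (ρ : ℝ) (hρ : ¬ IsEigenvalue A (ρ : ℂ))
    (u : EuclideanSpace ℂ (Fin n)) (hu : ‖u‖ = 1)
    (u' : EuclideanSpace ℂ (Fin n))
    (hu' : u' = ‖mApp ((A - (ρ : ℂ) • 1)⁻¹ ^ 2) u‖⁻¹ • mApp ((A - (ρ : ℂ) • 1)⁻¹ ^ 2) u) :
    (⟪u', u⟫ : ℂ).im = 0 ∧ 0 < (⟪u', u⟫ : ℂ).re ∧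
      mApp ((A - (ρ : ℂ) • 1) ^ 2) u' =
        (((‖mApp (A - (ρ : ℂ) • 1) u'‖ ^ 2 : ℝ) : ℂ) / ⟪u', u⟫) • u := by
  set B := A - (ρ : ℂ) • 1
  have hB : B.IsHermitian := hA.sub (Matrix.isHermitian_one.smul (Complex.conj_ofReal ρ))
  have hsq (v : EuclideanSpace ℂ (Fin n)) : mApp (B ^ 2) v = mApp B (mApp B v) := by
    rw [pow_two, mApp_mul]
  set w := mApp (B⁻¹ ^ 2) u with hw
  have hBw : mApp (B ^ 2) w = u := by
    rw [hw, Matrix.inv_pow']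
    exact mApp_mApp_inv ((isUnit_sub_smul_one_of_not_isEigenvalue hρ).pow 2) u
  have hu0 : u ≠ 0 := norm_ne_zero_iff.mp (by simp [hu])
  have hw0 : w ≠ 0 := fun h ↦ hu0 (by rw [← hBw, h, mApp_zero])
  have hu_eq : u = ‖w‖ • mApp B (mApp B u') := by
    rw [← hsq, hu', mApp_smul_real, hBw, smul_smul, mul_inv_cancel₀ (norm_ne_zero_iff.mpr hw0),
      one_smul]
  rw [hsq]
  exact (Matrix.isSymmetric_toEuclideanLin_iff.mpr hB).apply_apply_eq_div_inner_smul
    (norm_pos_iff.mpr hw0) hu_eq hu0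
end

section
/- Let A be an n×n real symmetric matrix, x a unit eigenvector with Ax = λx, v a unit vector with ⟨v, x⟩ = 0, and Φ ∈ (0, π/2). Set u = cos(Φ)·x + sin(Φ)·v and ρ = ⟨u, Au⟩, and assume ρ is not an eigenvalue of A (so A−ρI is invertible). Let u' = (A−ρI)^{-2}u / ‖(A−ρI)^{-2}u‖ and let Φ' be the angle between u' and x. Then Φ' ∈ [0, π/2) and tan(Φ') = (λ−ρ)²·‖(A−ρI)^{-2}v‖·tan(Φ). -/
open scoped RealInnerProductSpace Matrix

/-- The action of a real matrix on a vector of `EuclideanSpace ℝ (Fin n)`. -/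
noncomputable def mAppR {n : ℕ} (A : Matrix (Fin n) (Fin n) ℝ)
    (v : EuclideanSpace ℝ (Fin n)) : EuclideanSpace ℝ (Fin n) :=
  Matrix.toEuclideanLin A v

/-- `μ` is an eigenvalue of the real matrix `A`. -/
def IsEigenvalueR {n : ℕ} (A : Matrix (Fin n) (Fin n) ℝ) (μ : ℝ) : Prop :=
  ∃ x : EuclideanSpace ℝ (Fin n), x ≠ 0 ∧ mAppR A x = μ • x

/-- The angle between two vectors, `arccos (⟪a, b⟫ / (‖a‖ * ‖b‖)) ∈ [0, π]`. -/
noncomputable def angleR {n : ℕ} (a b : EuclideanSpace ℝ (Fin n)) : ℝ :=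
  Real.arccos (⟪a, b⟫ / (‖a‖ * ‖b‖))

/-! The resolvent `(A - ρI)⁻²` is symmetric and has `x` as an eigenvector with eigenvalue
`(λ - ρ)⁻²`, so it maps `u` to `(λ - ρ)⁻² cos Φ • x + sin Φ • (A - ρI)⁻² v`, whose second summand
is orthogonal to `x`. For `c > 0` and `w ⊥ x` the angle between `c • x + w` and `x` is acute with
tangent `‖w‖ / (c ‖x‖)`, and normalising a vector does not change its angles. -/

open InnerProductGeometry

section AngleGeometry

variable {V : Type*} [NormedAddCommGroup V] [InnerProductSpace ℝ V]

lemma angle_inv_norm_smul_left (g y : V) : angle (‖g‖⁻¹ • g) y = angle g y := by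
  rcases eq_or_ne g 0 with rfl | hg
  · simp
  · exact angle_smul_left_of_pos g y (by positivity)

lemma angle_smul_add_of_inner_eq_zero {x w : V} (hx : x ≠ 0) (hwx : ⟪w, x⟫ = 0) {c : ℝ}
    (hc : 0 < c) :
    angle (c • x + w) x < Real.pi / 2 ∧ Real.tan (angle (c • x + w) x) = ‖w‖ / (c * ‖x‖) := by
  have hperp : ⟪c • x, w⟫ = 0 := by rw [real_inner_smul_left, real_inner_comm, hwx, mul_zero]
  have hangle : angle (c • x + w) x = angle (c • x) (c • x + w) := by
    rw [angle_comm, angle_smul_left_of_pos x _ hc]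
  rw [hangle, tan_angle_add_of_inner_eq_zero hperp, norm_smul, Real.norm_of_nonneg hc.le]
  exact ⟨angle_add_lt_pi_div_two_of_inner_eq_zero hperp (smul_ne_zero hc.ne' hx), rfl⟩

lemma angleR_eq_angle {n : ℕ} (a b : EuclideanSpace ℝ (Fin n)) : angleR a b = angle a b := rfl

end AngleGeometry

section MatrixAction

variable {n : ℕ}

lemma mAppR_add (P : Matrix (Fin n) (Fin n) ℝ) (y z : EuclideanSpace ℝ (Fin n)) :
    mAppR P (y + z) = mAppR P y + mAppR P z :=
  map_add _ y z

lemma mAppR_smul (P : Matrix (Fin n) (Fin n) ℝ) (c : ℝ) (y : EuclideanSpace ℝ (Fin n)) :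
    mAppR P (c • y) = c • mAppR P y :=
  map_smul _ c y

lemma mAppR_one (y : EuclideanSpace ℝ (Fin n)) : mAppR 1 y = y := by
  simp [mAppR]

lemma mAppR_mul (P Q : Matrix (Fin n) (Fin n) ℝ) (y : EuclideanSpace ℝ (Fin n)) :
    mAppR (P * Q) y = mAppR P (mAppR Q y) := by
  simp [mAppR]

lemma mAppR_sub_smul_one (A : Matrix (Fin n) (Fin n) ℝ) (ρ : ℝ) (y : EuclideanSpace ℝ (Fin n)) :
    mAppR (A - ρ • 1) y = mAppR A y - ρ • y := by
  simp [mAppR]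

lemma inner_mAppR_of_isSymm {B : Matrix (Fin n) (Fin n) ℝ} (hB : B.IsSymm)
    (a b : EuclideanSpace ℝ (Fin n)) : ⟪mAppR B a, b⟫ = ⟪a, mAppR B b⟫ :=
  Matrix.isSymmetric_toEuclideanLin_iff.mpr (Matrix.isHermitian_iff_isSymm.mpr hB) a b

lemma inner_mAppR_eq_zero_of_eigen {B : Matrix (Fin n) (Fin n) ℝ} (hB : B.IsSymm)
    {x v : EuclideanSpace ℝ (Fin n)} {μ : ℝ} (hx : mAppR B x = μ • x) (hvx : ⟪v, x⟫ = 0) :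
    ⟪mAppR B v, x⟫ = 0 := by
  rw [inner_mAppR_of_isSymm hB, hx, real_inner_smul_right, hvx, mul_zero]

lemma isUnit_det_sub_smul_one {A : Matrix (Fin n) (Fin n) ℝ} {ρ : ℝ}
    (hρ : ¬ IsEigenvalueR A ρ) : IsUnit (A - ρ • 1).det := by
  rw [isUnit_iff_ne_zero]
  intro hdet
  obtain ⟨y, hy0, hy⟩ := Matrix.exists_mulVec_eq_zero_iff.mpr hdet
  refine hρ ⟨WithLp.toLp 2 y, by simpa using hy0, ?_⟩
  rw [← sub_eq_zero, ← mAppR_sub_smul_one]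
  exact congrArg (WithLp.toLp 2) hy

lemma mAppR_inv_of_eigen {M : Matrix (Fin n) (Fin n) ℝ} (hM : IsUnit M.det)
    {x : EuclideanSpace ℝ (Fin n)} {μ : ℝ} (h : mAppR M x = μ • x) :
    mAppR M⁻¹ x = μ⁻¹ • x := by
  have hx : x = μ • mAppR M⁻¹ x := by
    rw [← mAppR_smul, ← h, ← mAppR_mul, Matrix.nonsing_inv_mul M hM, mAppR_one]
  rcases eq_or_ne μ 0 with rfl | hμ
  · rw [zero_smul] at hx
    subst hx
    simp only [mAppR, map_zero, smul_zero]
  · rw [hx, smul_smul, inv_mul_cancel₀ hμ, one_smul, ← hx]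

lemma mAppR_pow_of_eigen {M : Matrix (Fin n) (Fin n) ℝ} {x : EuclideanSpace ℝ (Fin n)} {μ : ℝ}
    (h : mAppR M x = μ • x) (k : ℕ) : mAppR (M ^ k) x = μ ^ k • x := by
  induction k with
  | zero => rw [pow_zero, pow_zero, one_smul, mAppR_one]
  | succ k ih => rw [pow_succ', mAppR_mul, ih, mAppR_smul, h, smul_smul, pow_succ]

end MatrixAction

theorem stmt14_general {n : ℕ} (A : Matrix (Fin n) (Fin n) ℝ) (hA : A.IsSymm)
    (x : EuclideanSpace ℝ (Fin n)) (lam : ℝ) (hx : ‖x‖ = 1)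
    (hxeig : mAppR A x = lam • x)
    (v : EuclideanSpace ℝ (Fin n)) (hvx : ⟪v, x⟫ = 0)
    (Φ : ℝ) (hΦ : Φ ∈ Set.Ioo 0 (Real.pi / 2))
    (u : EuclideanSpace ℝ (Fin n)) (hu : u = Real.cos Φ • x + Real.sin Φ • v)
    (ρ : ℝ) (hρeig : ¬ IsEigenvalueR A ρ)
    (u' : EuclideanSpace ℝ (Fin n))
    (hu' : u' = ‖mAppR ((A - ρ • 1)⁻¹ ^ 2) u‖⁻¹ • mAppR ((A - ρ • 1)⁻¹ ^ 2) u)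
    (Φ' : ℝ) (hΦ' : Φ' = angleR u' x) :
    Φ' ∈ Set.Ico 0 (Real.pi / 2) ∧
      Real.tan Φ' = (lam - ρ) ^ 2 * ‖mAppR ((A - ρ • 1)⁻¹ ^ 2) v‖ * Real.tan Φ := by
  set B := (A - ρ • 1)⁻¹ ^ 2
  have hx0 : x ≠ 0 := norm_ne_zero_iff.mp (by simp [hx])
  have hlam : lam - ρ ≠ 0 := fun h => hρeig ⟨x, hx0, by rwa [← sub_eq_zero.mp h]⟩
  have hBx : mAppR B x = ((lam - ρ)⁻¹) ^ 2 • x := by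
    refine mAppR_pow_of_eigen (mAppR_inv_of_eigen (isUnit_det_sub_smul_one hρeig) ?_) 2
    rw [mAppR_sub_smul_one, hxeig, sub_smul]
  have hBsymm : B.IsSymm := ((hA.sub (Matrix.isSymm_one.smul ρ)).inv).pow 2
  have hBu : mAppR B u = (Real.cos Φ * ((lam - ρ)⁻¹) ^ 2) • x + Real.sin Φ • mAppR B v := by
    rw [hu, mAppR_add, mAppR_smul, mAppR_smul, hBx, smul_smul]
  have hcos : 0 < Real.cos Φ := Real.cos_pos_of_mem_Ioo ⟨by linarith [hΦ.1, Real.pi_pos], hΦ.2⟩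
  have hsin : 0 < Real.sin Φ := Real.sin_pos_of_pos_of_lt_pi hΦ.1 (by linarith [hΦ.2, Real.pi_pos])
  have hperp : ⟪Real.sin Φ • mAppR B v, x⟫ = 0 := by
    rw [real_inner_smul_left, inner_mAppR_eq_zero_of_eigen hBsymm hBx hvx, mul_zero]
  obtain ⟨hlt, htan⟩ := angle_smul_add_of_inner_eq_zero hx0 hperp
    (by positivity : 0 < Real.cos Φ * ((lam - ρ)⁻¹) ^ 2)
  have hΦ'B : Φ' = angle (mAppR B u) x := by
    rw [hΦ', hu', angleR_eq_angle, angle_inv_norm_smul_left]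
  rw [hΦ'B, hBu]
  refine ⟨⟨angle_nonneg _ _, hlt⟩, ?_⟩
  rw [htan, hx, norm_smul, Real.norm_of_nonneg hsin.le, Real.tan_eq_sin_div_cos]
  field_simp

theorem stmt14 {n : ℕ} (A : Matrix (Fin n) (Fin n) ℝ) (hA : A.IsSymm)
    (x : EuclideanSpace ℝ (Fin n)) (lam : ℝ) (hx : ‖x‖ = 1)
    (hxeig : mAppR A x = lam • x)
    (v : EuclideanSpace ℝ (Fin n)) (hv : ‖v‖ = 1) (hvx : ⟪v, x⟫ = 0)
    (Φ : ℝ) (hΦ : Φ ∈ Set.Ioo 0 (Real.pi / 2))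
    (u : EuclideanSpace ℝ (Fin n)) (hu : u = Real.cos Φ • x + Real.sin Φ • v)
    (ρ : ℝ) (hρ : ρ = ⟪u, mAppR A u⟫) (hρeig : ¬ IsEigenvalueR A ρ)
    (u' : EuclideanSpace ℝ (Fin n))
    (hu' : u' = ‖mAppR ((A - ρ • 1)⁻¹ ^ 2) u‖⁻¹ • mAppR ((A - ρ • 1)⁻¹ ^ 2) u)
    (Φ' : ℝ) (hΦ' : Φ' = angleR u' x) :
    Φ' ∈ Set.Ico 0 (Real.pi / 2) ∧
      Real.tan Φ' = (lam - ρ) ^ 2 * ‖mAppR ((A - ρ • 1)⁻¹ ^ 2) v‖ * Real.tan Φ :=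
  stmt14_general A hA x lam hx hxeig v hvx Φ hΦ u hu ρ hρeig u' hu' Φ' hΦ'
end

section
/- Let A be an n×n real symmetric matrix and let x be a unit eigenvector with Ax = λx, where λ is a simple eigenvalue of A (its eigenspace is one-dimensional). Let (u_k) be a sequence of unit vectors in ℝⁿ such that, with ρ_k = ⟨u_k, A u_k⟩, the matrix A−ρ_k I is invertible for every k and u_{k+1} = (A−ρ_k I)^{-2} u_k / ‖(A−ρ_k I)^{-2} u_k‖, and suppose u_k → x as k → ∞. Let Φ_k denote the angle between u_k and x. Then the convergence is of order five: there exist a constant C > 0 and an index N such that Φ_{k+1} ≤ C·Φ_k⁵ for all k ≥ N. -/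
/-!
Write `u = ⟪x, u⟫ • x + v` with `v ⟂ x`, so that `‖v‖ = sin Φ ≤ Φ`. Because `x` is an eigenvector
of the symmetric `A`, the Rayleigh quotient satisfies `ρ - λ = ⟪v, (A - λ) v⟫ = O(‖v‖²)`. The
map `(A - ρ)⁻²` multiplies the `x`-component by `(λ - ρ)⁻²`, while on `x^⊥`, where `A - λ` is
bounded below by simplicity of `λ`, it enlarges the orthogonal component by at most a bounded
factor. Hence `tan Φ_{k+1} ≤ const · (λ - ρ)² ‖v‖ = O(Φ_k⁵)`.
-/

open scoped RealInnerProductSpace Matrix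

open InnerProductGeometry Real

section Angle

variable {E : Type*} [NormedAddCommGroup E] [InnerProductSpace ℝ E] {x : E}

lemma norm_sub_inner_smul_sq (hx : ‖x‖ = 1) (w : E) :
    ‖w - ⟪x, w⟫ • x‖ ^ 2 = ‖w‖ ^ 2 - ⟪x, w⟫ ^ 2 := by
  rw [norm_sub_sq_real, inner_smul_right, real_inner_comm, norm_smul, hx, norm_eq_abs]
  ring_nf
  rw [sq_abs]
  ring

lemma sin_angle_mul_norm (hx : ‖x‖ = 1) (w : E) :
    sin (angle w x) * ‖w‖ = ‖w - ⟪x, w⟫ • x‖ := by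
  have h := sin_angle_mul_norm_mul_norm w x
  rw [hx, mul_one, real_inner_self_eq_norm_sq, real_inner_self_eq_norm_sq, hx,
    real_inner_comm x w] at h
  rw [h, ← sqrt_sq (norm_nonneg (w - _)), norm_sub_inner_smul_sq hx]
  ring_nf

lemma norm_sub_inner_smul_le_angle (hx : ‖x‖ = 1) {u : E} (hu : ‖u‖ = 1) :
    ‖u - ⟪x, u⟫ • x‖ ≤ angle u x := by
  rw [← sin_angle_mul_norm hx, hu, mul_one]
  exact sin_le (angle_nonneg u x)

lemma angle_le_pi_div_two_mul_norm_sub_inner_smul_div (hx : ‖x‖ = 1) {w : E}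
    (hw : 0 < ⟪x, w⟫) : angle w x ≤ π / 2 * (‖w - ⟪x, w⟫ • x‖ / ⟪x, w⟫) := by
  have hnorm : ⟪x, w⟫ ≤ ‖w‖ := by simpa [hx] using real_inner_le_norm x w
  have hle : angle w x ≤ π / 2 := by
    rw [angle, arccos_le_pi_div_two, real_inner_comm]
    positivity
  calc angle w x = π / 2 * (2 / π * angle w x) := by field_simp
    _ ≤ π / 2 * sin (angle w x) := by gcongr; exact mul_le_sin (angle_nonneg w x) hle
    _ = π / 2 * (‖w - ⟪x, w⟫ • x‖ / ‖w‖) := by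
      rw [← sin_angle_mul_norm hx, mul_div_cancel_right₀ _ (hw.trans_le hnorm).ne']
    _ ≤ π / 2 * (‖w - ⟪x, w⟫ • x‖ / ⟪x, w⟫) := by gcongr

end Angle

section Eigenvector

variable {E : Type*} [NormedAddCommGroup E] [InnerProductSpace ℝ E] {T : E →L[ℝ] E} {x : E}
  {μ : ℝ}

lemma exists_pos_mul_norm_le_norm_sub_smul_of_inner_eq_zero [FiniteDimensional ℝ E]
    (hsimple : ∀ y, T y = μ • y → ∃ c : ℝ, y = c • x) :
    ∃ δ > 0, ∀ z, ⟪x, z⟫ = 0 → δ * ‖z‖ ≤ ‖T z - μ • z‖ := by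
  let f := ((T - μ • 1 : E →L[ℝ] E) : E →ₗ[ℝ] E) ∘ₗ (ℝ ∙ x)ᗮ.subtype
  have hker : LinearMap.ker f = ⊥ := by
    refine LinearMap.ker_eq_bot'.mpr fun z hz ↦ ?_
    obtain ⟨c, hc⟩ := hsimple z (by simpa [f, sub_eq_zero] using hz)
    have hxz : ⟪x, (z : E)⟫ = 0 := Submodule.mem_orthogonal_singleton_iff_inner_right.mp z.2
    have hzz : ⟪(z : E), z⟫ = 0 :=
      calc ⟪(z : E), z⟫ = ⟪c • x, z⟫ := by rw [← hc]
        _ = 0 := by rw [real_inner_smul_left, hxz, mul_zero]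
    exact Subtype.ext (inner_self_eq_zero.mp hzz)
  obtain ⟨K, -, hK⟩ := f.exists_antilipschitzWith hker
  obtain ⟨δ, hδ, hf⟩ := antilipschitzWith_iff_exists_mul_le_norm.mp ⟨K, hK⟩
  exact ⟨δ, hδ, fun z hz ↦
    hf ⟨z, Submodule.mem_orthogonal_singleton_iff_inner_right.mpr hz⟩⟩

lemma inner_sub_smul_apply_of_eigenvector (hT : (T : E →ₗ[ℝ] E).IsSymmetric)
    (hTx : T x = μ • x) (ρ : ℝ) (z : E) :
    ⟪x, (T - ρ • 1) z⟫ = (μ - ρ) * ⟪x, z⟫ := by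
  have hsymm : ⟪x, T z⟫ = ⟪T x, z⟫ := (hT x z).symm
  simp only [sub_apply, smul_apply, one_apply_eq_self, inner_sub_right, inner_smul_right, hsymm,
    hTx, inner_smul_left, RCLike.conj_to_real]
  ring

lemma abs_inner_apply_self_sub_le (hT : (T : E →ₗ[ℝ] E).IsSymmetric) (hTx : T x = μ • x)
    {u : E} (hu : ‖u‖ = 1) :
    |⟪u, T u⟫ - μ| ≤ ‖T - μ • 1‖ * ‖u - ⟪x, u⟫ • x‖ ^ 2 := by
  set S := T - μ • 1
  set v := u - ⟪x, u⟫ • x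
  have hSx : S x = 0 := by simp [S, hTx]
  have hSu : S u = S v := by simp [v, map_sub, hSx]
  have hxSv : ⟪x, S v⟫ = 0 := by
    rw [inner_sub_smul_apply_of_eigenvector hT hTx, sub_self, zero_mul]
  have hrayleigh : ⟪u, T u⟫ - μ = ⟪v, S v⟫ := by
    calc ⟪u, T u⟫ - μ = ⟪u, S u⟫ := by simp [S, inner_sub_right, inner_smul_right, hu]
      _ = ⟪v, S v⟫ := by
        rw [hSu, show u = v + ⟪x, u⟫ • x by simp [v], inner_add_left, inner_smul_left,
          real_inner_comm, hxSv]
        simp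
  calc |⟪u, T u⟫ - μ| = |⟪v, S v⟫| := by rw [hrayleigh]
    _ ≤ ‖v‖ * ‖S v‖ := abs_real_inner_le_norm _ _
    _ ≤ ‖v‖ * (‖S‖ * ‖v‖) := by gcongr; exact S.le_opNorm v
    _ = ‖S‖ * ‖v‖ ^ 2 := by ring

lemma half_mul_norm_le_norm_sub_smul_apply {δ ρ : ℝ}
    (hgap : ∀ z, ⟪x, z⟫ = 0 → δ * ‖z‖ ≤ ‖T z - μ • z‖) (hρ : |ρ - μ| ≤ δ / 2) {z : E}
    (hz : ⟪x, z⟫ = 0) : δ / 2 * ‖z‖ ≤ ‖(T - ρ • 1) z‖ := by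
  have hshift : (T - ρ • 1) z = (T z - μ • z) - (ρ - μ) • z := by
    simp only [sub_apply, smul_apply, one_apply_eq_self, sub_smul]
    abel
  have hsmall : ‖(ρ - μ) • z‖ ≤ δ / 2 * ‖z‖ := by
    rw [norm_smul, norm_eq_abs]
    gcongr
  have := norm_sub_norm_le (T z - μ • z) ((ρ - μ) • z)
  rw [← hshift] at this
  linarith [hgap z hz]

lemma inner_eq_sq_mul_inner_of_apply_apply_eq (hT : (T : E →ₗ[ℝ] E).IsSymmetric)
    (hTx : T x = μ • x) {ρ : ℝ} {u w : E} (hw : (T - ρ • 1) ((T - ρ • 1) w) = u) :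
    ⟪x, u⟫ = (μ - ρ) ^ 2 * ⟪x, w⟫ := by
  rw [← hw, inner_sub_smul_apply_of_eigenvector hT hTx, inner_sub_smul_apply_of_eigenvector hT hTx]
  ring

lemma sq_half_mul_norm_sub_inner_smul_le (hT : (T : E →ₗ[ℝ] E).IsSymmetric) (hx : ‖x‖ = 1)
    (hTx : T x = μ • x) {δ ρ : ℝ} (hgap : ∀ z, ⟪x, z⟫ = 0 → δ * ‖z‖ ≤ ‖T z - μ • z‖)
    (hρ : |ρ - μ| ≤ δ / 2) {u w : E} (hw : (T - ρ • 1) ((T - ρ • 1) w) = u) :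
    (δ / 2) ^ 2 * ‖w - ⟪x, w⟫ • x‖ ≤ ‖u - ⟪x, u⟫ • x‖ := by
  set S := T - ρ • 1
  set v := w - ⟪x, w⟫ • x
  have hSx : S x = (μ - ρ) • x := by simp [S, hTx, sub_smul]
  have hSSv : S (S v) = u - ⟪x, u⟫ • x := by
    simp only [v, map_sub, map_smul, hSx, hw, smul_smul,
      inner_eq_sq_mul_inner_of_apply_apply_eq hT hTx hw]
    ring_nf
  have hvx : ⟪x, v⟫ = 0 := by
    rw [inner_sub_right, inner_smul_right, real_inner_self_eq_norm_sq, hx]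
    ring
  have hSvx : ⟪x, S v⟫ = 0 := by rw [inner_sub_smul_apply_of_eigenvector hT hTx, hvx, mul_zero]
  calc (δ / 2) ^ 2 * ‖v‖ = δ / 2 * (δ / 2 * ‖v‖) := by ring
    _ ≤ δ / 2 * ‖S v‖ := mul_le_mul_of_nonneg_left
        (half_mul_norm_le_norm_sub_smul_apply hgap hρ hvx) ((abs_nonneg _).trans hρ)
    _ ≤ ‖S (S v)‖ := half_mul_norm_le_norm_sub_smul_apply hgap hρ hSvx
    _ = ‖u - ⟪x, u⟫ • x‖ := by rw [hSSv]

lemma angle_le_mul_angle_pow_five_of_apply_apply_eq (hT : (T : E →ₗ[ℝ] E).IsSymmetric)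
    (hx : ‖x‖ = 1) (hTx : T x = μ • x) {δ : ℝ} (hδ : 0 < δ)
    (hgap : ∀ z, ⟪x, z⟫ = 0 → δ * ‖z‖ ≤ ‖T z - μ • z‖) {u w : E} (hu : ‖u‖ = 1)
    (hux : 1 / 2 ≤ ⟪x, u⟫) {ρ : ℝ} (hρu : ρ = ⟪u, T u⟫) (hρ : |ρ - μ| ≤ δ / 2)
    (hw : (T - ρ • 1) ((T - ρ • 1) w) = u) :
    angle w x ≤ π * (2 * ‖T - μ • 1‖ / δ) ^ 2 * angle u x ^ 5 := by
  set M := ‖T - μ • 1‖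
  set v := u - ⟪x, u⟫ • x
  set v' := w - ⟪x, w⟫ • x
  have hca := inner_eq_sq_mul_inner_of_apply_apply_eq hT hTx hw
  have hc : 0 < ⟪x, u⟫ := by linarith
  have ha : 0 < ⟪x, w⟫ := pos_of_mul_pos_right (hca ▸ hc) (sq_nonneg (μ - ρ))
  have hμρ : (μ - ρ) ^ 2 ≠ 0 := left_ne_zero_of_mul (hca ▸ hc.ne')
  have hv' : ‖v'‖ ≤ ‖v‖ / (δ / 2) ^ 2 :=
    (le_div_iff₀' (by positivity)).mpr (sq_half_mul_norm_sub_inner_smul_le hT hx hTx hgap hρ hw)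
  have hρv : (μ - ρ) ^ 2 ≤ (M * ‖v‖ ^ 2) ^ 2 := by
    rw [← sq_abs, abs_sub_comm]
    gcongr
    exact hρu ▸ abs_inner_apply_self_sub_le hT hTx hu
  calc angle w x ≤ π / 2 * (‖v'‖ / ⟪x, w⟫) :=
        angle_le_pi_div_two_mul_norm_sub_inner_smul_div hx ha
    _ = π / 2 * ((μ - ρ) ^ 2 * ‖v'‖ / ⟪x, u⟫) := by rw [hca, mul_div_mul_left _ _ hμρ]
    _ ≤ π / 2 * ((M * ‖v‖ ^ 2) ^ 2 * (‖v‖ / (δ / 2) ^ 2) / (1 / 2)) := by gcongr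
    _ = π * (2 * M / δ) ^ 2 * ‖v‖ ^ 5 := by field_simp
    _ ≤ π * (2 * M / δ) ^ 2 * angle u x ^ 5 := by
      gcongr
      exact norm_sub_inner_smul_le_angle hx hu

lemma eventually_half_le_inner_and_abs_inner_apply_sub_le {ι : Type*} {l : Filter ι}
    {u : ι → E} (hconv : Filter.Tendsto u l (nhds x)) (hx : ‖x‖ = 1) (hTx : T x = μ • x)
    {ε : ℝ} (hε : 0 < ε) : ∀ᶠ k in l, 1 / 2 ≤ ⟪x, u k⟫ ∧ |⟪u k, T (u k)⟫ - μ| ≤ ε := by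
  have hinner : Filter.Tendsto (fun k ↦ ⟪x, u k⟫) l (nhds 1) := by
    have h := (tendsto_const_nhds (x := x)).inner (𝕜 := ℝ) hconv
    rwa [real_inner_self_eq_norm_sq, hx, one_pow] at h
  have hrayleigh : Filter.Tendsto (fun k ↦ ⟪u k, T (u k)⟫) l (nhds μ) := by
    have h := hconv.inner (𝕜 := ℝ) ((T.continuous.tendsto x).comp hconv)
    rwa [hTx, inner_smul_right, real_inner_self_eq_norm_sq, hx, one_pow, mul_one] at h
  filter_upwards [hinner.eventually (le_mem_nhds one_half_lt_one),
    hrayleigh.eventually (Metric.closedBall_mem_nhds μ hε)] with k hc hr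
  exact ⟨hc, hr⟩

end Eigenvector

lemma Matrix.toEuclideanCLM_apply_apply_inv_sq {ι 𝕜 : Type*} [Fintype ι] [DecidableEq ι]
    [RCLike 𝕜] {B : Matrix ι ι 𝕜} (hB : IsUnit B) (v : EuclideanSpace 𝕜 ι) :
    toEuclideanCLM (𝕜 := 𝕜) B (toEuclideanCLM (𝕜 := 𝕜) B (toEuclideanCLM (𝕜 := 𝕜) (B⁻¹ ^ 2) v))
      = v := by
  have hdet := (Matrix.isUnit_iff_isUnit_det B).mp hB
  have h : B * (B * B⁻¹ ^ 2) = 1 := by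
    rw [sq, Matrix.mul_nonsing_inv_cancel_left B _ hdet, Matrix.mul_nonsing_inv _ hdet]
  simpa using congr(toEuclideanCLM (𝕜 := 𝕜) $h v)

theorem stmt16 {n : ℕ} (A : Matrix (Fin n) (Fin n) ℝ) (hA : A.IsSymm)
    (x : EuclideanSpace ℝ (Fin n)) (lam : ℝ) (hx : ‖x‖ = 1)
    (hxeig : mAppR A x = lam • x)
    (hsimple : ∀ y : EuclideanSpace ℝ (Fin n), mAppR A y = lam • y →
      ∃ c : ℝ, y = c • x)
    (u : ℕ → EuclideanSpace ℝ (Fin n)) (hu : ∀ k, ‖u k‖ = 1)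
    (ρ : ℕ → ℝ) (hρ : ∀ k, ρ k = ⟪u k, mAppR A (u k)⟫)
    (hinv : ∀ k, IsUnit (A - ρ k • 1))
    (hnext : ∀ k, u (k + 1) =
      ‖mAppR ((A - ρ k • 1)⁻¹ ^ 2) (u k)‖⁻¹ • mAppR ((A - ρ k • 1)⁻¹ ^ 2) (u k))
    (hconv : Filter.Tendsto u Filter.atTop (nhds x))
    (Φ : ℕ → ℝ) (hΦ : ∀ k, Φ k = angleR (u k) x) :
    ∃ C > (0 : ℝ), ∃ N : ℕ, ∀ k ≥ N, Φ (k + 1) ≤ C * Φ k ^ 5 := by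
  set T := Matrix.toEuclideanCLM (𝕜 := ℝ) A
  have hT : (T : EuclideanSpace ℝ (Fin n) →ₗ[ℝ] _).IsSymmetric :=
    Matrix.isSymmetric_toEuclideanLin_iff.mpr (Matrix.isHermitian_iff_isSymm.mpr hA)
  have hTx : T x = lam • x := hxeig
  obtain ⟨δ, hδ, hgap⟩ := exists_pos_mul_norm_le_norm_sub_smul_of_inner_eq_zero (T := T) hsimple
  obtain ⟨N, hN⟩ := Filter.eventually_atTop.mp
    (eventually_half_le_inner_and_abs_inner_apply_sub_le hconv hx hTx (half_pos hδ))
  refine ⟨π * (2 * ‖T - lam • 1‖ / δ) ^ 2 + 1, by positivity, N, fun k hk ↦ ?_⟩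
  obtain ⟨hux, hρk⟩ := hN k hk
  replace hρk : |ρ k - lam| ≤ δ / 2 := hρ k ▸ hρk
  set w := mAppR ((A - ρ k • 1)⁻¹ ^ 2) (u k)
  have hw : (T - ρ k • 1) ((T - ρ k • 1) w) = u k := by
    have hS : Matrix.toEuclideanCLM (𝕜 := ℝ) (A - ρ k • 1) = T - ρ k • 1 := by
      rw [map_sub, map_smul, map_one]
    rw [← hS]
    exact Matrix.toEuclideanCLM_apply_apply_inv_sq (hinv k) (u k)
  have hw0 : w ≠ 0 := by
    rintro hw0
    simpa [hw0, ← hw] using hu k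
  rw [hΦ, hΦ, hnext k]
  calc angle (‖w‖⁻¹ • w) x = angle w x := angle_smul_left_of_pos _ _ (by positivity)
    _ ≤ π * (2 * ‖T - lam • 1‖ / δ) ^ 2 * angle (u k) x ^ 5 :=
      angle_le_mul_angle_pow_five_of_apply_apply_eq hT hx hTx hδ hgap (hu k) hux (hρ k) hρk hw
    _ ≤ (π * (2 * ‖T - lam • 1‖ / δ) ^ 2 + 1) * angle (u k) x ^ 5 := by
      have := angle_nonneg (u k) x
      gcongr
      linarith
end
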